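/- arXiv:2209.01159 — 2 statements merged into one kernel-verified Lean document; each statement's English description precedes it below -/
import Mathlib

section
/- For every p ≥ 1 and every (β⋆,γ⋆) ∈ ℝ^p × ℝ^p, the derivative of the depth-(p+1) QAOA state with respect to γ_{p+1} at the padded point Γ^{p+1}(p+1,p+1) equals -i H_C |β⋆,γ⋆⟩, where |β⋆,γ⋆⟩ is the depth-p QAOA state; consequently ∂E_{p+1}/∂γ_{p+1} vanishes at Γ^{p+1}(p+1,p+1). -/
open Matrix Complex

noncomputable section

/-- Computational basis index set for `n` qubits, identified with `Fin 2 ^ n` via binary digits. -/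
abbrev QIdx (n : ℕ) := Fin n → Fin 2

/-- The Pauli X matrix. -/
def pauliX : Matrix (Fin 2) (Fin 2) ℂ := !![0, 1; 1, 0]

/-- The Pauli Z matrix. -/
def pauliZ : Matrix (Fin 2) (Fin 2) ℂ := !![1, 0; 0, -1]

/-- The `n`-fold Kronecker product with `M` in the `i`-th tensor factor and the 2×2 identity in
every other factor, realized as a matrix on `ℂ^(2^n)` with indices `Fin n → Fin 2`. -/
def pauliAt {n : ℕ} (M : Matrix (Fin 2) (Fin 2) ℂ) (i : Fin n) :
    Matrix (QIdx n) (QIdx n) ℂ :=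
  Matrix.of fun s t => ∏ j, if j = i then M (s j) (t j) else if s j = t j then 1 else 0

/-- `σ^x_i`. -/
def sigmaX {n : ℕ} (i : Fin n) : Matrix (QIdx n) (QIdx n) ℂ := pauliAt pauliX i

/-- `σ^z_i`. -/
def sigmaZ {n : ℕ} (i : Fin n) : Matrix (QIdx n) (QIdx n) ℂ := pauliAt pauliZ i

lemma sigmaZ_eq_diagonal {n : ℕ} (i : Fin n) :
    sigmaZ i = Matrix.diagonal (fun s => pauliZ (s i) (s i)) := by
  ext s t
  simp only [sigmaZ, pauliAt, Matrix.of_apply, Matrix.diagonal_apply]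
  by_cases h : s = t
  · subst h
    simp [Finset.prod_ite_eq']
  · rw [if_neg h]
    obtain ⟨j₀, hj₀⟩ := Function.ne_iff.mp h
    refine Finset.prod_eq_zero (Finset.mem_univ j₀) ?_
    by_cases hji : j₀ = i
    · subst hji
      rw [if_pos rfl]
      have hz : ∀ a b : Fin 2, a ≠ b → pauliZ a b = 0 := by
        intro a b hab
        fin_cases a <;> fin_cases b <;> simp_all [pauliZ]
      exact hz _ _ hj₀
    · rw [if_neg hji, if_neg hj₀]

lemma sigmaZ_mul_comm {n : ℕ} (i j : Fin n) : sigmaZ i * sigmaZ j = sigmaZ j * sigmaZ i := by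
  rw [sigmaZ_eq_diagonal, sigmaZ_eq_diagonal, Matrix.diagonal_mul_diagonal,
    Matrix.diagonal_mul_diagonal]
  ext s
  simp [mul_comm]

/-- The MaxCut Hamiltonian `H_C = Σ_{{i,j} ∈ E} σ^z_i σ^z_j`. -/
def hamC (n : ℕ) (G : SimpleGraph (Fin n)) [DecidableRel G.Adj] :
    Matrix (QIdx n) (QIdx n) ℂ :=
  ∑ e ∈ G.edgeFinset,
    Sym2.lift ⟨fun i j => sigmaZ i * sigmaZ j, fun i j => sigmaZ_mul_comm i j⟩ e

/-- The mixing Hamiltonian `H_B = -Σ_i σ^x_i`. -/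
def hamB (n : ℕ) : Matrix (QIdx n) (QIdx n) ℂ := -(∑ i : Fin n, sigmaX i)

/-- `U_B(β) = exp(-i β H_B)`. -/
def uB (n : ℕ) (β : ℝ) : Matrix (QIdx n) (QIdx n) ℂ :=
  NormedSpace.exp ((-(Complex.I) * (β : ℂ)) • hamB n)

/-- `U_C(γ) = exp(-i γ H_C)`. -/
def uC (n : ℕ) (G : SimpleGraph (Fin n)) [DecidableRel G.Adj] (γ : ℝ) :
    Matrix (QIdx n) (QIdx n) ℂ :=
  NormedSpace.exp ((-(Complex.I) * (γ : ℂ)) • hamC n G)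

/-- The plus state `|+⟩ = 2^{-n/2} (1,…,1)ᵀ`. -/
def plusState (n : ℕ) : QIdx n → ℂ := fun _ => ((Real.sqrt 2 : ℂ))⁻¹ ^ n

/-- The `m`-th layer `U_B(β_{m+1}) U_C(γ_{m+1})` of the QAOA circuit (`m` is 0-indexed);
`1` if `m` is out of range. -/
def qaoaLayer (n : ℕ) (G : SimpleGraph (Fin n)) [DecidableRel G.Adj] {p : ℕ}
    (β γ : Fin p → ℝ) (m : ℕ) : Matrix (QIdx n) (QIdx n) ℂ :=
  if h : m < p then uB n (β ⟨m, h⟩) * uC n G (γ ⟨m, h⟩) else 1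

/-- The ordered product of the (0-indexed) layers `a, a+1, …, a+len-1` of the QAOA circuit, with
higher layers acting later (to the left). -/
def uProd (n : ℕ) (G : SimpleGraph (Fin n)) [DecidableRel G.Adj] {p : ℕ}
    (β γ : Fin p → ℝ) (a len : ℕ) : Matrix (QIdx n) (QIdx n) ℂ :=
  (((List.range' a len).reverse).map (qaoaLayer n G β γ)).prod

/-- The depth-`p` QAOA state `|β,γ⟩ = U_B(β_p) U_C(γ_p) ⋯ U_B(β_1) U_C(γ_1) |+⟩`. -/
def qaoaState (n : ℕ) (G : SimpleGraph (Fin n)) [DecidableRel G.Adj] {p : ℕ}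
    (β γ : Fin p → ℝ) : QIdx n → ℂ :=
  (uProd n G β γ 0 p).mulVec (plusState n)

/-- The depth-`p` QAOA cost function `E_p(β,γ) = ⟨β,γ| H_C |β,γ⟩` as a real-valued function on
`ℝ^p × ℝ^p`. -/
def energyE (n : ℕ) (G : SimpleGraph (Fin n)) [DecidableRel G.Adj] (p : ℕ)
    (x : (Fin p → ℝ) × (Fin p → ℝ)) : ℝ :=
  (star (qaoaState n G x.1 x.2) ⬝ᵥ (hamC n G).mulVec (qaoaState n G x.1 x.2)).re

/-- The point `Γ^{p+1}(i,j)` obtained from `(β⋆,γ⋆) ∈ ℝ^p × ℝ^p` by inserting a `0` at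
position `i` in the `β`-part and at position `j` in the `γ`-part. -/
def padded {p : ℕ} (x : (Fin p → ℝ) × (Fin p → ℝ)) (i j : Fin (p + 1)) :
    (Fin (p + 1) → ℝ) × (Fin (p + 1) → ℝ) :=
  (i.insertNth 0 x.1, j.insertNth 0 x.2)

/-- The coordinate direction in `ℝ^p × ℝ^p` corresponding to `β_l` (`Sum.inl l`) or
`γ_l` (`Sum.inr l`). -/
def coordDir {p : ℕ} : Fin p ⊕ Fin p → (Fin p → ℝ) × (Fin p → ℝ) :=
  Sum.elim (fun l => (Pi.single l 1, 0)) (fun l => (0, Pi.single l 1))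

/-- Partial derivative of a real function on `ℝ^p × ℝ^p` in the coordinate direction `a`. -/
def pderiv' {p : ℕ} (f : ((Fin p → ℝ) × (Fin p → ℝ)) → ℝ)
    (a : Fin p ⊕ Fin p) (x : (Fin p → ℝ) × (Fin p → ℝ)) : ℝ :=
  fderiv ℝ f x (coordDir a)

/-- The Hessian matrix of a real function on `ℝ^p × ℝ^p`, with rows and columns indexed by the
coordinates `β_1,…,β_p` (`Sum.inl`) and `γ_1,…,γ_p` (`Sum.inr`). -/
def hessian {p : ℕ} (f : ((Fin p → ℝ) × (Fin p → ℝ)) → ℝ)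
    (x : (Fin p → ℝ) × (Fin p → ℝ)) : Matrix (Fin p ⊕ Fin p) (Fin p ⊕ Fin p) ℝ :=
  Matrix.of fun a b => pderiv' (pderiv' f b) a x

/-- The commutator `[A, B] = AB - BA`. -/
def commMat {n : ℕ} (A B : Matrix (QIdx n) (QIdx n) ℂ) : Matrix (QIdx n) (QIdx n) ℂ :=
  A * B - B * A

end

/-!
Appending a layer with `β_{p+1} = 0` and `γ_{p+1} = t` turns the state `|β⋆,γ⋆⟩` into
`e^{-itH_C} |β⋆,γ⋆⟩`, whose `t`-derivative at `0` is `-i H_C |β⋆,γ⋆⟩`. Since `H_C` is Hermitian,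
`e^{-itH_C}` is unitary and commutes with `H_C`, so the energy along this line is constantly
`E_p(β⋆,γ⋆)` and its derivative vanishes. Both partial derivatives are line derivatives along this
line; this is legitimate because state and energy are differentiable, the circuit being a product
of matrix exponentials.
-/

open NormedSpace

section Hermitian

variable {n : ℕ}

lemma isHermitian_pauliAt {M : Matrix (Fin 2) (Fin 2) ℂ} (hM : M.IsHermitian) (i : Fin n) :
    (pauliAt M i).IsHermitian := by
  ext s t
  simp only [pauliAt, conjTranspose_apply, of_apply, star_prod]
  refine Finset.prod_congr rfl fun j _ => ?_
  split_ifs <;> simp_all [hM.apply, eq_comm]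

lemma isHermitian_pauliZ : pauliZ.IsHermitian := by
  ext a b
  fin_cases a <;> fin_cases b <;> simp [pauliZ]

lemma isHermitian_hamC (G : SimpleGraph (Fin n)) [DecidableRel G.Adj] :
    (hamC n G).IsHermitian := by
  refine isSelfAdjoint_sum _ fun e _ => ?_
  induction e using Sym2.ind with
  | _ i j =>
    have hZ (k : Fin n) : (sigmaZ k).IsHermitian := isHermitian_pauliAt isHermitian_pauliZ k
    exact ((hZ i).commute_iff (hZ j)).mp (sigmaZ_mul_comm i j)

end Hermitian

section Circuit

variable {n : ℕ} (G : SimpleGraph (Fin n)) [DecidableRel G.Adj] {p : ℕ} (β γ : Fin p → ℝ)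

lemma qaoaLayer_snoc_of_lt (b c : ℝ) {m : ℕ} (hm : m < p) :
    qaoaLayer n G (Fin.snoc β b) (Fin.snoc γ c) m = qaoaLayer n G β γ m := by
  rw [qaoaLayer, qaoaLayer, dif_pos hm, dif_pos (Nat.lt_succ_of_lt hm)]
  exact congrArg₂ _ (congrArg _ (Fin.snoc_castSucc (i := ⟨m, hm⟩) ..))
    (congrArg _ (Fin.snoc_castSucc (i := ⟨m, hm⟩) ..))

lemma qaoaLayer_snoc_self (b c : ℝ) :
    qaoaLayer n G (Fin.snoc β b) (Fin.snoc γ c) p = uB n b * uC n G c := by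
  rw [qaoaLayer, dif_pos p.lt_succ_self]
  exact congrArg₂ _ (congrArg _ (Fin.snoc_last (α := fun _ => ℝ) ..))
    (congrArg _ (Fin.snoc_last (α := fun _ => ℝ) ..))

lemma qaoaState_snoc (b c : ℝ) :
    qaoaState n G (Fin.snoc β b) (Fin.snoc γ c) = (uB n b * uC n G c) *ᵥ qaoaState n G β γ := by
  have hprefix : ((List.range' 0 p).reverse.map (qaoaLayer n G (Fin.snoc β b) (Fin.snoc γ c)))
      = (List.range' 0 p).reverse.map (qaoaLayer n G β γ) :=
    List.map_congr_left fun m hm => qaoaLayer_snoc_of_lt G β γ b c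
      (zero_add p ▸ (List.mem_range'_1.mp (List.mem_reverse.mp hm)).2)
  rw [qaoaState, qaoaState, uProd, uProd, List.range'_concat, List.reverse_append,
    List.map_append, List.prod_append, zero_add, one_mul, List.reverse_singleton,
    List.map_singleton, List.prod_singleton, qaoaLayer_snoc_self, hprefix, mulVec_mulVec]

lemma uB_zero : uB n 0 = 1 := by
  simp [uB]

lemma qaoaState_snoc_zero_snoc (t : ℝ) :
    qaoaState n G (Fin.snoc β 0) (Fin.snoc γ t) = uC n G t *ᵥ qaoaState n G β γ := by
  rw [qaoaState_snoc, uB_zero, one_mul]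

end Circuit

section UnitaryEvolution

variable {ι : Type*} [Fintype ι] [DecidableEq ι]

lemma exp_neg_I_mul_smul_mem_unitaryGroup {H : Matrix ι ι ℂ} (hH : H.IsHermitian) (t : ℝ) :
    exp ((-I * t) • H) ∈ unitaryGroup ι ℂ := by
  rw [mem_unitaryGroup_iff', star_eq_conjTranspose, ← Matrix.exp_conjTranspose,
    conjTranspose_smul, hH.eq, ← Matrix.exp_add_of_commute]
  · simp [Complex.conj_ofReal]
  · exact ((Commute.refl H).smul_left _).smul_right _

lemma star_mulVec_dotProduct_mulVec_mulVec {H U : Matrix ι ι ℂ} (hU : U ∈ unitaryGroup ι ℂ)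
    (hHU : Commute H U) (ψ : ι → ℂ) :
    star (U *ᵥ ψ) ⬝ᵥ H *ᵥ (U *ᵥ ψ) = star ψ ⬝ᵥ H *ᵥ ψ := by
  rw [star_mulVec, mulVec_mulVec, ← dotProduct_mulVec, mulVec_mulVec, hHU.eq, ← mul_assoc,
    ← star_eq_conjTranspose, (mem_unitaryGroup_iff').mp hU, one_mul]

end UnitaryEvolution

lemma energyE_snoc_zero_snoc {n : ℕ} (G : SimpleGraph (Fin n)) [DecidableRel G.Adj] {p : ℕ}
    (β γ : Fin p → ℝ) (t : ℝ) :
    energyE n G (p + 1) (Fin.snoc β 0, Fin.snoc γ t) = energyE n G p (β, γ) := by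
  have hU : uC n G t ∈ unitaryGroup _ ℂ :=
    exp_neg_I_mul_smul_mem_unitaryGroup (isHermitian_hamC G) t
  have hHU : Commute (hamC n G) (uC n G t) := ((Commute.refl _).smul_right _).exp_right
  simp only [energyE, qaoaState_snoc_zero_snoc, star_mulVec_dotProduct_mulVec_mulVec hU hHU]

section Smoothness

attribute [local instance] Matrix.linftyOpNormedRing Matrix.linftyOpNormedAlgebra

variable {ι : Type*} [Fintype ι] [DecidableEq ι]

lemma hasDerivAt_exp_neg_I_mul_smul (H : Matrix ι ι ℂ) (t : ℝ) :
    HasDerivAt (fun s : ℝ => exp ((-I * s) • H)) (exp ((-I * t) • H) * (-I • H)) t := by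
  have h (s : ℝ) : (-I * s) • H = s • (-I • H) := by
    rw [mul_comm, mul_smul, Complex.coe_smul]
  simp only [h]
  exact hasDerivAt_exp_smul_const (𝕂 := ℝ) (-I • H) t

lemma hasDerivAt_exp_neg_I_mul_smul_mulVec_zero (H : Matrix ι ι ℂ) (ψ : ι → ℂ) :
    HasDerivAt (fun t : ℝ => exp ((-I * t) • H) *ᵥ ψ) ((-I) • H *ᵥ ψ) 0 := by
  refine (((mulVecBilin ℝ ℝ).flip ψ).toContinuousLinearMap.hasFDerivAt.comp_hasDerivAt 0
    (hasDerivAt_exp_neg_I_mul_smul H 0)).congr_deriv ?_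
  show (exp ((-I * (0 : ℝ)) • H) * (-I • H)) *ᵥ ψ = _
  simp [neg_mulVec, smul_mulVec]

variable {n : ℕ} (G : SimpleGraph (Fin n)) [DecidableRel G.Adj] {p : ℕ}

lemma differentiable_uB : Differentiable ℝ (uB n) :=
  fun t => (hasDerivAt_exp_neg_I_mul_smul _ t).differentiableAt

lemma differentiable_uC : Differentiable ℝ (uC n G) :=
  fun t => (hasDerivAt_exp_neg_I_mul_smul _ t).differentiableAt

lemma differentiable_qaoaLayer (m : ℕ) :
    Differentiable ℝ fun x : (Fin p → ℝ) × (Fin p → ℝ) => qaoaLayer n G x.1 x.2 m := by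
  unfold qaoaLayer
  split_ifs with hm
  · exact (differentiable_uB.comp (by fun_prop)).mul ((differentiable_uC G).comp (by fun_prop))
  · exact differentiable_const _

lemma differentiable_qaoaState :
    Differentiable ℝ fun x : (Fin p → ℝ) × (Fin p → ℝ) => qaoaState n G x.1 x.2 := by
  have hU : Differentiable ℝ fun x : (Fin p → ℝ) × (Fin p → ℝ) => uProd n G x.1 x.2 0 p :=
    fun x => (HasFDerivAt.list_prod' fun m _ =>
      (differentiable_qaoaLayer G m x).hasFDerivAt).differentiableAt
  exact (((mulVecBilin ℝ ℝ).flip (plusState n)).toContinuousLinearMap.differentiable).comp hU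

lemma differentiable_energyE : Differentiable ℝ (energyE n G p) := by
  have hψ := differentiable_qaoaState G (p := p)
  unfold energyE
  simp only [dotProduct, mulVec]
  fun_prop

end Smoothness

lemma padded_last_add_smul_coordDir {p : ℕ} (β γ : Fin p → ℝ) (t : ℝ) :
    padded (β, γ) (Fin.last p) (Fin.last p) + t • coordDir (Sum.inr (Fin.last p)) =
      (Fin.snoc β 0, Fin.snoc γ t) := by
  ext i
  · simp [padded, coordDir, Fin.insertNth_last']
  · induction i using Fin.lastCases <;> simp [padded, coordDir, Fin.insertNth_last']

theorem stmt4_general (n : ℕ) (G : SimpleGraph (Fin n)) [DecidableRel G.Adj]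
    (p : ℕ) (β γ : Fin p → ℝ) :
    fderiv ℝ (fun x : (Fin (p + 1) → ℝ) × (Fin (p + 1) → ℝ) => qaoaState n G x.1 x.2)
        (padded (β, γ) (Fin.last p) (Fin.last p)) (coordDir (Sum.inr (Fin.last p))) =
      (-Complex.I) • (hamC n G).mulVec (qaoaState n G β γ) ∧
    pderiv' (energyE n G (p + 1)) (Sum.inr (Fin.last p))
      (padded (β, γ) (Fin.last p) (Fin.last p)) = 0 := by
  have hline := padded_last_add_smul_coordDir β γ
  constructor
  · have hψ : HasLineDerivAt ℝ (fun x : (Fin (p + 1) → ℝ) × (Fin (p + 1) → ℝ) =>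
        qaoaState n G x.1 x.2) ((-I) • hamC n G *ᵥ qaoaState n G β γ)
        (padded (β, γ) (Fin.last p) (Fin.last p)) (coordDir (Sum.inr (Fin.last p))) := by
      simp only [HasLineDerivAt, hline, qaoaState_snoc_zero_snoc]
      exact hasDerivAt_exp_neg_I_mul_smul_mulVec_zero (hamC n G) _
    rw [← (differentiable_qaoaState G _).lineDeriv_eq_fderiv, hψ.lineDeriv]
  · have hE : HasLineDerivAt ℝ (energyE n G (p + 1)) 0
        (padded (β, γ) (Fin.last p) (Fin.last p)) (coordDir (Sum.inr (Fin.last p))) := by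
      simpa only [HasLineDerivAt, hline, energyE_snoc_zero_snoc] using hasDerivAt_const _ _
    rw [pderiv', ← (differentiable_energyE G _).lineDeriv_eq_fderiv, hE.lineDeriv]

/-- the derivative of the depth-`(p+1)` state with respect to `γ_(p+1)` at
`Γ^(p+1)(p+1,p+1)` equals `-i H_C |β⋆,γ⋆⟩`, and `∂E_(p+1)/∂γ_(p+1)` vanishes there. -/
theorem stmt4 (n : ℕ) (hn : 1 ≤ n) (G : SimpleGraph (Fin n)) [DecidableRel G.Adj]
    (p : ℕ) (hp : 1 ≤ p) (β γ : Fin p → ℝ) :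
    fderiv ℝ (fun x : (Fin (p + 1) → ℝ) × (Fin (p + 1) → ℝ) => qaoaState n G x.1 x.2)
        (padded (β, γ) (Fin.last p) (Fin.last p)) (coordDir (Sum.inr (Fin.last p))) =
      (-Complex.I) • (hamC n G).mulVec (qaoaState n G β γ) ∧
    pderiv' (energyE n G (p + 1)) (Sum.inr (Fin.last p))
      (padded (β, γ) (Fin.last p) (Fin.last p)) = 0 :=
  stmt4_general n G p β γ
end

section
/- Hessian determinant at the first-layer padded point (case ii): let p ≥ 1 and let (β⋆,γ⋆) ∈ ℝ^p × ℝ^p be a critical point of E_p whose Hessian H_p at (β⋆,γ⋆) is nonsingular. Let H_{p+1} denote the Hessian of E_{p+1} at the padded point Γ^{p+1}(1,1), and set b = ∂²E_{p+1}/∂β_1∂γ_1 evaluated at Γ^{p+1}(1,1). Then ∂²E_{p+1}/∂β_1² vanishes at Γ^{p+1}(1,1), all mixed second derivatives ∂²E_{p+1}/∂β_m∂β_1 and ∂²E_{p+1}/∂γ_m∂β_1 with m ≥ 2 vanish at Γ^{p+1}(1,1), and if b ≠ 0 then det H_{p+1} = -b² · det H_p. -/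
open Matrix Complex

/-!
Inserting the layer `U_B(β₁) U_C(0)` in front of the circuit changes the state only by a global
phase, because `|+⟩` is an eigenvector of `H_B`. Hence `E_{p+1}(Fin.cons t β, Fin.cons 0 γ) =
E_p(β, γ)` for every `t`. Two consequences: on the hyperplane `γ₁ = 0` the derivative `∂E_{p+1}/∂β₁`
vanishes identically, so its derivatives along that hyperplane vanish and the `β₁`-column of the
Hessian is zero except for the entry `b` in row `γ₁`; and restricted to the remaining coordinates
the Hessian at `Γ^{p+1}(1,1)` is the Hessian of `E_p` at `(β⋆, γ⋆)`. A Schur complement with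
respect to the `(β₁, γ₁)` block, whose inverse has vanishing `γ₁γ₁` entry, gives the determinant.
-/

namespace Matrix

variable {K κ : Type*} [Field K] [Fintype κ] [DecidableEq κ]

theorem det_fromBlocks_of_row_zero_col_zero (b h : K) (B : Matrix (Fin 2) κ K)
    (C : Matrix κ (Fin 2) K) (D : Matrix κ κ K) (hB : B 0 = 0) (hC : ∀ k, C k 0 = 0) :
    (fromBlocks !![0, b; b, h] B C D).det = -b ^ 2 * D.det := by
  by_cases hb : b = 0
  · subst hb
    rw [det_eq_zero_of_row_eq_zero (Sum.inl 0)]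
    · ring
    rintro (j | k)
    · fin_cases j <;> rfl
    · exact congrFun hB k
  have hA : (!![0, b; b, h] : Matrix (Fin 2) (Fin 2) K).det = -b ^ 2 := by
    rw [det_fin_two_of]; ring
  have : Invertible (!![0, b; b, h] : Matrix (Fin 2) (Fin 2) K) :=
    invertibleOfIsUnitDet _ (by rw [hA]; simpa using hb)
  have hinv : (!![0, b; b, h] : Matrix (Fin 2) (Fin 2) K)⁻¹ 1 1 = 0 := by
    rw [inv_def, adjugate_fin_two]; simp
  have hschur : C * ⅟(!![0, b; b, h] : Matrix (Fin 2) (Fin 2) K) * B = 0 := by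
    ext k l
    simp [mul_apply, Fin.sum_univ_two, hC, congrFun hB, invOf_eq_nonsing_inv, hinv]
  rw [det_fromBlocks₁₁, hschur, sub_zero, hA]

def finSuccSumEquiv (q : ℕ) : Fin 2 ⊕ (Fin q ⊕ Fin q) ≃ Fin (q + 1) ⊕ Fin (q + 1) where
  toFun := Sum.elim ![Sum.inl 0, Sum.inr 0] (Sum.map Fin.succ Fin.succ)
  invFun := Sum.elim (Fin.cases (Sum.inl 0) (Sum.inr ∘ Sum.inl))
    (Fin.cases (Sum.inl 1) (Sum.inr ∘ Sum.inr))
  left_inv := by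
    rintro (i | j | j)
    · fin_cases i <;> rfl
    · rfl
    · rfl
  right_inv := by
    rintro (i | i) <;> refine Fin.cases rfl (fun j => rfl) i

theorem IsSymm.det_eq_neg_sq_mul_det_submatrix_succ {q : ℕ}
    {H : Matrix (Fin (q + 1) ⊕ Fin (q + 1)) (Fin (q + 1) ⊕ Fin (q + 1)) K} (hH : H.IsSymm)
    (hcol : ∀ a, a ≠ Sum.inr 0 → H a (Sum.inl 0) = 0) :
    H.det = -H (Sum.inl 0) (Sum.inr 0) ^ 2 *
      (H.submatrix (Sum.map Fin.succ Fin.succ) (Sum.map Fin.succ Fin.succ)).det := by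
  have hrow : ∀ c, c ≠ Sum.inr 0 → H (Sum.inl 0) c = 0 := fun c hc => by
    rw [← hH.apply]; exact hcol c hc
  have hsucc : ∀ c : Fin q ⊕ Fin q, Sum.map Fin.succ Fin.succ c ≠ Sum.inr 0 := by
    rintro (c | c) <;> simp [Fin.succ_ne_zero]
  set M := H.submatrix (finSuccSumEquiv q) (finSuccSumEquiv q)
  have hM : M.toBlocks₁₁ = !![0, H (Sum.inl 0) (Sum.inr 0); H (Sum.inl 0) (Sum.inr 0),
      H (Sum.inr 0) (Sum.inr 0)] := by
    ext i j
    fin_cases i <;> fin_cases j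
    · exact hcol _ Sum.inl_ne_inr
    · rfl
    · exact hH.apply _ _
    · rfl
  calc H.det = (Matrix.fromBlocks M.toBlocks₁₁ M.toBlocks₁₂ M.toBlocks₂₁ M.toBlocks₂₂).det := by
        rw [fromBlocks_toBlocks, det_submatrix_equiv_self]
    _ = _ := by
      rw [hM]
      exact det_fromBlocks_of_row_zero_col_zero _ _ _ _ _ (funext fun c => hrow _ (hsucc c))
        (fun a => hcol _ (hsucc a))

end Matrix

theorem fderiv_apply_eq_zero_of_forall_add_smul {E F : Type*} [NormedAddCommGroup E]
    [NormedSpace ℝ E] [NormedAddCommGroup F] [NormedSpace ℝ F] {f : E → F} {x v : E}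
    (hf : DifferentiableAt ℝ f x) (h : ∀ t : ℝ, f (x + t • v) = f x) : fderiv ℝ f x v = 0 := by
  rw [← hf.lineDeriv_eq_fderiv, lineDeriv, funext h, deriv_const]

section PartialDerivatives

variable {p : ℕ} {f : (Fin p → ℝ) × (Fin p → ℝ) → ℝ}

theorem differentiable_pderiv' (hf : ContDiff ℝ 2 f) (a : Fin p ⊕ Fin p) :
    Differentiable ℝ (pderiv' f a) :=
  fun x => ((hf.fderiv_right one_add_one_eq_two.le).differentiable one_ne_zero x).clm_apply
    (differentiableAt_const _)

theorem hessian_isSymm (hf : ContDiff ℝ 2 f) (x : (Fin p → ℝ) × (Fin p → ℝ)) :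
    (hessian f x).IsSymm := by
  have hd : Differentiable ℝ (fderiv ℝ f) :=
    (hf.fderiv_right one_add_one_eq_two.le).differentiable one_ne_zero
  have hsnd : ∀ a c, pderiv' (pderiv' f c) a x =
      fderiv ℝ (fderiv ℝ f) x (coordDir a) (coordDir c) := fun a c => by
    unfold pderiv'
    rw [fderiv_clm_apply (hd x) (differentiableAt_const _)]
    simp
  ext a c
  simp only [Matrix.transpose_apply, hessian, Matrix.of_apply]
  rw [hsnd, hsnd, (hf.contDiffAt.isSymmSndFDerivAt minSmoothness_of_isRCLikeNormedField.le).eq]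

/-- The padding `x ↦ Γ^{p+1}(1,1)`. -/
def padCLM (p : ℕ) : (Fin p → ℝ) × (Fin p → ℝ) →L[ℝ] (Fin (p + 1) → ℝ) × (Fin (p + 1) → ℝ) :=
  let cons : (Fin p → ℝ) →L[ℝ] Fin (p + 1) → ℝ := .finCons 0 (.id ℝ _)
  cons.prodMap cons

theorem padCLM_apply (x : (Fin p → ℝ) × (Fin p → ℝ)) :
    padCLM p x = (Fin.cons 0 x.1, Fin.cons 0 x.2) :=
  rfl

theorem padCLM_coordDir (a : Fin p ⊕ Fin p) :
    padCLM p (coordDir a) = coordDir (Sum.map Fin.succ Fin.succ a) := by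
  rcases a with l | l <;> ext i <;> refine Fin.cases ?_ (fun j => ?_) i <;>
    simp [padCLM, coordDir, Pi.single_apply]

theorem pderiv'_comp_padCLM {x : (Fin p → ℝ) × (Fin p → ℝ)}
    {f : (Fin (p + 1) → ℝ) × (Fin (p + 1) → ℝ) → ℝ} (hf : DifferentiableAt ℝ f (padCLM p x))
    (a : Fin p ⊕ Fin p) :
    pderiv' (f ∘ padCLM p) a x = pderiv' f (Sum.map Fin.succ Fin.succ a) (padCLM p x) := by
  rw [pderiv', fderiv_comp x hf (padCLM p).differentiableAt, ContinuousLinearMap.comp_apply,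
    ContinuousLinearMap.fderiv, padCLM_coordDir, pderiv']

theorem hessian_comp_padCLM {f : (Fin (p + 1) → ℝ) × (Fin (p + 1) → ℝ) → ℝ} (hf : ContDiff ℝ 2 f)
    (x : (Fin p → ℝ) × (Fin p → ℝ)) :
    hessian (f ∘ padCLM p) x = (hessian f (padCLM p x)).submatrix
      (Sum.map Fin.succ Fin.succ) (Sum.map Fin.succ Fin.succ) := by
  ext a c
  have hc : pderiv' (f ∘ padCLM p) c = pderiv' f (Sum.map Fin.succ Fin.succ c) ∘ padCLM p :=
    funext fun y => pderiv'_comp_padCLM (hf.differentiable two_ne_zero _) c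
  simp only [hessian, Matrix.of_apply, Matrix.submatrix_apply, hc]
  exact pderiv'_comp_padCLM (differentiable_pderiv' hf _ _) a

theorem coordDir_snd_apply_zero {a : Fin (p + 1) ⊕ Fin (p + 1)} (ha : a ≠ Sum.inr 0) :
    (coordDir a).2 0 = 0 := by
  rcases a with l | l
  · rfl
  · exact Pi.single_eq_of_ne' (by simpa using ha) 1

end PartialDerivatives

-- Any norm would do here: all norms on a finite-dimensional space induce the product topology.
attribute [local instance] Matrix.linftyOpNormedAddCommGroup Matrix.linftyOpNormedRing
  Matrix.linftyOpNormedAlgebra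

section MatrixExp

variable {m E : Type*} [Fintype m] [NormedAddCommGroup E] [NormedSpace ℝ E]

theorem contDiff_exp_neg_I_mul_smul [DecidableEq m] (A : Matrix m m ℂ) :
    ContDiff ℝ ⊤ (fun t : ℝ => NormedSpace.exp ((-Complex.I * t) • A)) := by
  have hexp : ContDiff ℝ ⊤ (NormedSpace.exp : Matrix m m ℂ → Matrix m m ℂ) :=
    AnalyticOnNhd.contDiff fun x _ => NormedSpace.exp_analytic (𝕂 := ℝ) x
  exact hexp.comp ((contDiff_const.mul Complex.ofRealCLM.contDiff).smul contDiff_const)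

theorem ContDiff.matrix_mulVec_const [DecidableEq m] {k : WithTop ℕ∞} {F : E → Matrix m m ℂ}
    (hF : ContDiff ℝ k F) (v : m → ℂ) : ContDiff ℝ k (fun x => F x *ᵥ v) := by
  let L : Matrix m m ℂ →L[ℝ] m → ℂ := LinearMap.toContinuousLinearMap
    (((LinearMap.applyₗ v).comp Matrix.toLin'.toLinearMap).restrictScalars ℝ)
  exact L.contDiff.comp hF

theorem ContDiff.re_dotProduct_mulVec {k : WithTop ℕ∞} {ψ : E → m → ℂ} (hψ : ContDiff ℝ k ψ)
    (H : Matrix m m ℂ) : ContDiff ℝ k (fun x => (star (ψ x) ⬝ᵥ H *ᵥ ψ x).re) := by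
  have hψ' := contDiff_pi.1 hψ
  refine Complex.reCLM.contDiff.comp (ContDiff.sum fun s _ => ?_)
  exact (Complex.conjCLE.contDiff.comp (hψ' s)).mul
    (ContDiff.sum fun t _ => contDiff_const.mul (hψ' t))

theorem exp_mulVec_of_mulVec_eq_smul [DecidableEq m] {A : Matrix m m ℂ} {v : m → ℂ} {c : ℂ}
    (h : A *ᵥ v = c • v) : NormedSpace.exp A *ᵥ v = Complex.exp c • v := by
  have hpow : ∀ k : ℕ, A ^ k *ᵥ v = c ^ k • v := by
    intro k
    induction k with
    | zero => simp
    | succ k ih =>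
      rw [pow_succ', ← Matrix.mulVec_mulVec, ih, Matrix.mulVec_smul, h, smul_smul, pow_succ]
  have hA := (NormedSpace.exp_series_hasSum_exp' (𝕂 := ℂ) A).map
    (Matrix.mulVec.addMonoidHomLeft v) (continuous_id.matrix_mulVec continuous_const)
  have hc := (NormedSpace.exp_series_hasSum_exp' (𝕂 := ℂ) c).smul_const v
  rw [← Complex.exp_eq_exp_ℂ] at hc
  refine hA.unique (hc.congr_fun fun k => ?_)
  simp [Matrix.mulVec.addMonoidHomLeft, Matrix.smul_mulVec, hpow, smul_smul]

end MatrixExp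

theorem pauliAt_mulVec_const {n : ℕ} {M : Matrix (Fin 2) (Fin 2) ℂ} (hM : ∀ a, ∑ b, M a b = 1)
    (i : Fin n) (c : ℂ) : pauliAt M i *ᵥ (fun _ => c) = fun _ => c := by
  funext s
  have hrow : ∀ j, ∑ b, (if j = i then M (s j) b else if s j = b then 1 else 0) = 1 := by
    intro j
    split_ifs
    · exact hM _
    · simp
  simp only [pauliAt, Matrix.mulVec, dotProduct, Matrix.of_apply, ← Finset.sum_mul]
  rw [← Fintype.prod_sum fun j b => if j = i then M (s j) b else if s j = b then (1 : ℂ) else 0,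
    Finset.prod_eq_one fun j _ => hrow j, one_mul]

theorem hamB_mulVec_plusState (n : ℕ) : hamB n *ᵥ plusState n = (-n : ℂ) • plusState n := by
  have hX : ∀ a, ∑ b, pauliX a b = 1 := by
    intro a; fin_cases a <;> simp [pauliX]
  have hσ : ∀ i : Fin n, sigmaX i *ᵥ plusState n = plusState n :=
    fun i => pauliAt_mulVec_const hX i _
  rw [hamB, Matrix.neg_mulVec, Matrix.sum_mulVec]
  simp only [hσ, Finset.sum_const, Finset.card_univ, Fintype.card_fin, neg_smul,
    Nat.cast_smul_eq_nsmul]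

section QAOA

variable {n : ℕ} (G : SimpleGraph (Fin n)) [DecidableRel G.Adj] {p : ℕ}

theorem contDiff_qaoaLayer (l : ℕ) :
    ContDiff ℝ ⊤ (fun x : (Fin p → ℝ) × (Fin p → ℝ) => qaoaLayer n G x.1 x.2 l) := by
  unfold qaoaLayer
  split_ifs with hl
  · have huB : ContDiff ℝ ⊤ (uB n) := contDiff_exp_neg_I_mul_smul _
    have huC : ContDiff ℝ ⊤ (uC n G) := contDiff_exp_neg_I_mul_smul _
    exact (huB.comp ((contDiff_apply ℝ ℝ _).comp contDiff_fst)).mul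
      (huC.comp ((contDiff_apply ℝ ℝ _).comp contDiff_snd))
  · exact contDiff_const

theorem uProd_succ (β γ : Fin p → ℝ) (a len : ℕ) :
    uProd n G β γ a (len + 1) = qaoaLayer n G β γ (a + len) * uProd n G β γ a len := by
  simp [uProd, List.range'_concat]

theorem contDiff_uProd (a len : ℕ) :
    ContDiff ℝ ⊤ (fun x : (Fin p → ℝ) × (Fin p → ℝ) => uProd n G x.1 x.2 a len) := by
  induction len with
  | zero => exact contDiff_const
  | succ len ih =>
    simp only [uProd_succ]
    exact (contDiff_qaoaLayer G _).mul ih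

theorem contDiff_energyE (p : ℕ) : ContDiff ℝ ⊤ (energyE n G p) :=
  ((contDiff_uProd G 0 p).matrix_mulVec_const _).re_dotProduct_mulVec _

theorem uB_mulVec_plusState (t : ℝ) :
    uB n t *ᵥ plusState n = Complex.exp (Complex.I * n * t) • plusState n := by
  refine exp_mulVec_of_mulVec_eq_smul ?_
  rw [Matrix.smul_mulVec, hamB_mulVec_plusState, smul_smul]
  ring_nf

theorem uC_zero : uC n G 0 = 1 := by
  simp [uC]

theorem qaoaLayer_cons_zero (t : ℝ) (β γ : Fin p → ℝ) :
    qaoaLayer n G (Fin.cons t β) (Fin.cons 0 γ) 0 = uB n t := by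
  simp [qaoaLayer, uC_zero]

theorem qaoaLayer_cons_succ (t : ℝ) (β γ : Fin p → ℝ) (l : ℕ) :
    qaoaLayer n G (Fin.cons t β) (Fin.cons 0 γ) (l + 1) = qaoaLayer n G β γ l := by
  unfold qaoaLayer
  by_cases hl : l < p
  · rw [dif_pos (by omega), dif_pos hl]
    exact congrArg₂ _ (congrArg _ (Fin.cons_succ _ _ ⟨l, hl⟩))
      (congrArg _ (Fin.cons_succ _ _ ⟨l, hl⟩))
  · rw [dif_neg (by omega), dif_neg hl]

theorem uProd_succ' (β γ : Fin p → ℝ) (a len : ℕ) :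
    uProd n G β γ a (len + 1) = uProd n G β γ (a + 1) len * qaoaLayer n G β γ a := by
  simp [uProd, List.range'_succ]

theorem uProd_cons (t : ℝ) (β γ : Fin p → ℝ) (a len : ℕ) :
    uProd n G (Fin.cons t β) (Fin.cons 0 γ) (a + 1) len = uProd n G β γ a len := by
  induction len with
  | zero => rfl
  | succ len ih =>
    rw [uProd_succ, uProd_succ, ih, add_right_comm, qaoaLayer_cons_succ]

theorem qaoaState_cons (t : ℝ) (β γ : Fin p → ℝ) :
    qaoaState n G (Fin.cons t β) (Fin.cons 0 γ) =
      Complex.exp (Complex.I * n * t) • qaoaState n G β γ := by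
  rw [qaoaState, uProd_succ', ← Matrix.mulVec_mulVec, qaoaLayer_cons_zero, uB_mulVec_plusState,
    Matrix.mulVec_smul, uProd_cons, qaoaState]

theorem energyE_cons (t : ℝ) (β γ : Fin p → ℝ) :
    energyE n G (p + 1) (Fin.cons t β, Fin.cons 0 γ) = energyE n G p (β, γ) := by
  have hphase : Complex.exp (Complex.I * n * t) * star (Complex.exp (Complex.I * n * t)) = 1 := by
    rw [Complex.star_def, ← Complex.exp_conj, ← Complex.exp_add]
    simp
  simp only [energyE, qaoaState_cons, star_smul, Matrix.mulVec_smul, smul_dotProduct,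
    dotProduct_smul, smul_smul, hphase, one_smul]

theorem energyE_comp_padCLM : energyE n G (p + 1) ∘ padCLM p = energyE n G p :=
  funext fun x => energyE_cons G 0 x.1 x.2

theorem energyE_eq_of_snd_zero {y : (Fin (p + 1) → ℝ) × (Fin (p + 1) → ℝ)} (hy : y.2 0 = 0) :
    energyE n G (p + 1) y = energyE n G p (Fin.tail y.1, Fin.tail y.2) := by
  obtain ⟨β, γ⟩ := y
  dsimp only at hy ⊢
  conv_lhs => rw [← Fin.cons_self_tail β, ← Fin.cons_self_tail γ, hy]
  exact energyE_cons G _ _ _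

theorem pderiv'_energyE_inl_zero {y : (Fin (p + 1) → ℝ) × (Fin (p + 1) → ℝ)} (hy : y.2 0 = 0) :
    pderiv' (energyE n G (p + 1)) (Sum.inl 0) y = 0 := by
  refine fderiv_apply_eq_zero_of_forall_add_smul
    ((contDiff_energyE G _).differentiable (by simp) y) fun t => ?_
  rw [energyE_eq_of_snd_zero G (by simpa [coordDir] using hy), energyE_eq_of_snd_zero G hy]
  congr 2 <;> funext i <;> simp [coordDir, Fin.tail]

theorem hessian_energyE_apply_inl_zero {y : (Fin (p + 1) → ℝ) × (Fin (p + 1) → ℝ)}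
    (hy : y.2 0 = 0) {a : Fin (p + 1) ⊕ Fin (p + 1)} (ha : a ≠ Sum.inr 0) :
    hessian (energyE n G (p + 1)) y a (Sum.inl 0) = 0 := by
  refine fderiv_apply_eq_zero_of_forall_add_smul
    (differentiable_pderiv' ((contDiff_energyE G _).of_le le_top) _ y) fun t => ?_
  rw [pderiv'_energyE_inl_zero G hy,
    pderiv'_energyE_inl_zero G (by simp [hy, coordDir_snd_apply_zero ha])]

end QAOA

theorem stmt9_general (n : ℕ) (G : SimpleGraph (Fin n)) [DecidableRel G.Adj]
    (p : ℕ) (β γ : Fin p → ℝ) :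
    let Γ := padded (β, γ) 0 0
    let b := pderiv' (pderiv' (energyE n G (p + 1)) (Sum.inr 0)) (Sum.inl 0) Γ
    pderiv' (pderiv' (energyE n G (p + 1)) (Sum.inl 0)) (Sum.inl 0) Γ = 0 ∧
    (∀ m : Fin (p + 1), m ≠ 0 →
      pderiv' (pderiv' (energyE n G (p + 1)) (Sum.inl 0)) (Sum.inl m) Γ = 0 ∧
      pderiv' (pderiv' (energyE n G (p + 1)) (Sum.inl 0)) (Sum.inr m) Γ = 0) ∧
    (b ≠ 0 →
      (hessian (energyE n G (p + 1)) Γ).det = -b ^ 2 * (hessian (energyE n G p) (β, γ)).det) := by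
  intro Γ b
  have hE : ContDiff ℝ 2 (energyE n G (p + 1)) := (contDiff_energyE G _).of_le le_top
  have hΓ : Γ = padCLM p (β, γ) := by simp [Γ, padded, padCLM_apply, Fin.insertNth_zero']
  have hΓ₂ : Γ.2 0 = 0 := by simp [hΓ, padCLM_apply]
  have hcol : ∀ a, a ≠ Sum.inr 0 → hessian (energyE n G (p + 1)) Γ a (Sum.inl 0) = 0 :=
    fun _ => hessian_energyE_apply_inl_zero G hΓ₂
  refine ⟨hcol _ Sum.inl_ne_inr, fun m hm => ⟨hcol _ Sum.inl_ne_inr, hcol _ (by simpa using hm)⟩,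
    fun _ => ?_⟩
  have hblock : (hessian (energyE n G (p + 1)) Γ).submatrix (Sum.map Fin.succ Fin.succ)
      (Sum.map Fin.succ Fin.succ) = hessian (energyE n G p) (β, γ) := by
    rw [hΓ, ← hessian_comp_padCLM hE, energyE_comp_padCLM]
  rw [(hessian_isSymm hE Γ).det_eq_neg_sq_mul_det_submatrix_succ hcol, hblock]
  rfl

/-- Hessian determinant at the first-layer padded point (case ii). -/
theorem stmt9 (n : ℕ) (hn : 1 ≤ n) (G : SimpleGraph (Fin n)) [DecidableRel G.Adj]
    (p : ℕ) (hp : 1 ≤ p) (β γ : Fin p → ℝ)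
    (hcrit : fderiv ℝ (energyE n G p) (β, γ) = 0)
    (hns : (hessian (energyE n G p) (β, γ)).det ≠ 0) :
    let Γ := padded (β, γ) 0 0
    let b := pderiv' (pderiv' (energyE n G (p + 1)) (Sum.inr 0)) (Sum.inl 0) Γ
    pderiv' (pderiv' (energyE n G (p + 1)) (Sum.inl 0)) (Sum.inl 0) Γ = 0 ∧
    (∀ m : Fin (p + 1), m ≠ 0 →
      pderiv' (pderiv' (energyE n G (p + 1)) (Sum.inl 0)) (Sum.inl m) Γ = 0 ∧
      pderiv' (pderiv' (energyE n G (p + 1)) (Sum.inl 0)) (Sum.inr m) Γ = 0) ∧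
    (b ≠ 0 →
      (hessian (energyE n G (p + 1)) Γ).det = -b ^ 2 * (hessian (energyE n G p) (β, γ)).det) :=
  stmt9_general n G p β γ
end
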